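/- With the setup of the backward recursion above and assuming β_0(s0) > 0, the ancestral sampler that at each step t samples y with probability proportional to w(s_t,y)·ψ_{t+1}(y)·β_{t+1}(δ(s_t,y)) generates each admissible sequence x ∈ V^n with probability P(x)·1[x admissible]/β_0(s0), i.e., it samples exactly from the conditional distribution of the chain given all constraints hold. -/

import Mathlib

open Finset

/-- State trajectory of a deterministic-update system started at `s0`,
driven by the emission stream `x`. -/
def traj {S V : Type*} (δ : S → V → S) (s0 : S) (x : ℕ → V) : ℕ → S
  | 0 => s0
  | t + 1 => δ (traj δ s0 x t) (x t)

/-- Total extension of a finite emission word to an infinite stream. -/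
noncomputable def ext {V : Type*} [Inhabited V] {n : ℕ} (x : Fin n → V) : ℕ → V :=
  fun k => if h : k < n then x ⟨k, h⟩ else default

private lemma tele0 (a b : ℕ → ℝ) :
    ∀ n : ℕ, (∀ t ≤ n, b t ≠ 0) →
      ∏ t ∈ range n, (a t * b (t + 1) / b t) = (∏ t ∈ range n, a t) * b n / b 0
  | 0, hb => by simp [div_self (hb 0 le_rfl)]
  | (n + 1), hb => by
    rw [prod_range_succ, prod_range_succ,
      tele0 a b n (fun t ht => hb t (ht.trans (Nat.le_succ n)))]
    have hbn : b n ≠ 0 := hb n (Nat.le_succ n)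
    have hb0 : b 0 ≠ 0 := hb 0 (Nat.zero_le _)
    field_simp

private lemma keylem (n : ℕ) (a p b : ℕ → ℝ) (ha : ∀ t, 0 ≤ a t)
    (hp : ∀ t, p t = 0 ∨ p t = 1) (hb : ∀ t ≤ n, 0 ≤ b t)
    (hle : ∀ t < n, a t * p t * b (t + 1) ≤ b t) (hbn : b n = 1) (hb0 : 0 < b 0) :
    ∏ t ∈ range n, (a t * p t * b (t + 1) / b t) =
      (∏ t ∈ range n, a t) * (if ∀ t < n, p t = 1 then 1 else 0) / b 0 := by
  by_cases hgood : ∀ t < n, p t = 1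
  · rw [if_pos hgood, mul_one]
    have hrw : ∏ t ∈ range n, (a t * p t * b (t + 1) / b t) =
        ∏ t ∈ range n, (a t * b (t + 1) / b t) := by
      refine prod_congr rfl fun t ht => ?_
      rw [hgood t (mem_range.mp ht), mul_one]
    rw [hrw]
    by_cases hz : ∀ t ≤ n, b t ≠ 0
    · rw [tele0 a b n hz, hbn, mul_one]
    · push_neg at hz
      classical
      obtain ⟨t0, ht0n, ht0⟩ := hz
      set m := Nat.findGreatest (fun t => b t = 0) n with hm
      have hbm : b m = 0 := Nat.findGreatest_spec (P := fun t => b t = 0) ht0n ht0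
      have hmle : m ≤ n := Nat.findGreatest_le n
      have hmn : m < n := by
        rcases lt_or_eq_of_le hmle with h | h
        · exact h
        · exfalso; rw [h, hbn] at hbm; norm_num at hbm
      have hbm1 : b (m + 1) ≠ 0 :=
        Nat.findGreatest_is_greatest (Nat.lt_succ_self m) hmn
      have hbm1pos : 0 < b (m + 1) :=
        lt_of_le_of_ne (hb (m + 1) hmn) (Ne.symm hbm1)
      have ham : a m = 0 := by
        have h1 : a m * p m * b (m + 1) ≤ 0 := by
          have := hle m hmn; rwa [hbm] at this
        rw [hgood m hmn, mul_one] at h1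
        have h2 : 0 ≤ a m * b (m + 1) := mul_nonneg (ha m) hbm1pos.le
        have h3 : a m * b (m + 1) = 0 := le_antisymm h1 h2
        exact (mul_eq_zero.mp h3).resolve_right hbm1
      have hmem : m ∈ range n := mem_range.mpr hmn
      rw [prod_eq_zero hmem (by simp [ham]), prod_eq_zero hmem ham]
      simp
  · rw [if_neg hgood]
    push_neg at hgood
    obtain ⟨t0, ht0n, ht0⟩ := hgood
    have hp0 : p t0 = 0 := (hp t0).resolve_right ht0
    rw [prod_eq_zero (mem_range.mpr ht0n) (by simp [hp0])]
    simp

/-- With the backward recursion as before and `β_0(s0) > 0`, the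
ancestral sampler that at step `t` samples `y` with probability
`w(s_t,y)·ψ_{t+1}(y)·β_{t+1}(δ(s_t,y)) / β_t(s_t)` generates each sequence
`x ∈ Vⁿ` with probability `P(x)·1[x admissible] / β_0(s0)`: it samples exactly
from the conditional distribution of the chain given all constraints hold. -/
theorem stmt6 {S V : Type*} [Fintype S] [Fintype V] [Inhabited V]
    (δ : S → V → S) (w : S → V → ℝ)
    (hw0 : ∀ s y, 0 ≤ w s y) (hw1 : ∀ s, ∑ y, w s y = 1)
    (n : ℕ) (ψ : ℕ → V → ℝ) (hψ : ∀ t y, ψ t y = 0 ∨ ψ t y = 1)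
    (β : ℕ → S → ℝ)
    (hβn : ∀ s, β n s = 1)
    (hβ : ∀ t < n, ∀ s, β t s = ∑ y, w s y * ψ (t + 1) y * β (t + 1) (δ s y))
    (s0 : S) (hpos : 0 < β 0 s0) (x : Fin n → V) :
    (∏ t : Fin n,
        w (traj δ s0 (ext x) t) (x t) * ψ (t + 1) (x t) *
          β (t + 1) (traj δ s0 (ext x) (t + 1)) / β t (traj δ s0 (ext x) t)) =
      (∏ t : Fin n, w (traj δ s0 (ext x) t) (x t)) *
        (if ∀ t : Fin n, ψ (t + 1) (x t) = 1 then 1 else 0) / β 0 s0 := by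
  -- β is nonnegative up to time n
  have hψ0 : ∀ t y, 0 ≤ ψ t y := by
    intro t y; rcases hψ t y with h | h <;> rw [h] <;> norm_num
  have hβnn : ∀ t ≤ n, ∀ s, 0 ≤ β t s := by
    have key : ∀ k, ∀ t, n - k ≤ t → t ≤ n → ∀ s, 0 ≤ β t s := by
      intro k
      induction k with
      | zero =>
        intro t h1 h2 s
        have : t = n := le_antisymm h2 (by simpa using h1)
        rw [this, hβn]; norm_num
      | succ k ih =>
        intro t h1 h2 s
        by_cases h : n - k ≤ t
        · exact ih t h h2 s
        · push_neg at h
          have htn : t < n := lt_of_lt_of_le h (Nat.sub_le n k)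
          rw [hβ t htn s]
          refine Finset.sum_nonneg fun y _ => ?_
          exact mul_nonneg (mul_nonneg (hw0 s y) (hψ0 _ y))
            (ih (t + 1) (by omega) htn (δ s y))
    intro t ht s
    exact key n t (by omega) ht s
  set X := ext x with hX
  have hx : ∀ t : Fin n, X ↑t = x t := by
    intro t; simp [hX, _root_.ext, t.isLt]
  have main := keylem n
    (fun t => w (traj δ s0 X t) (X t))
    (fun t => ψ (t + 1) (X t))
    (fun t => β t (traj δ s0 X t))
    (fun t => hw0 _ _)
    (fun t => hψ _ _)
    (fun t ht => hβnn t ht _)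
    (by
      intro t ht
      show w (traj δ s0 X t) (X t) * ψ (t + 1) (X t) *
          β (t + 1) (traj δ s0 X (t + 1)) ≤ β t (traj δ s0 X t)
      have hstep : traj δ s0 X (t + 1) = δ (traj δ s0 X t) (X t) := rfl
      rw [hstep, hβ t ht]
      exact Finset.single_le_sum
        (fun y _ => mul_nonneg (mul_nonneg (hw0 _ y) (hψ0 _ y))
          (hβnn (t + 1) ht (δ _ y))) (mem_univ (X t)))
    (hβn _) hpos
  have hprod1 : (∏ t : Fin n,
        w (traj δ s0 X t) (x t) * ψ (t + 1) (x t) *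
          β (t + 1) (traj δ s0 X (t + 1)) / β t (traj δ s0 X t)) =
      ∏ t ∈ range n, (w (traj δ s0 X t) (X t) * ψ (t + 1) (X t) *
          β (t + 1) (traj δ s0 X (t + 1)) / β t (traj δ s0 X t)) := by
    rw [← Fin.prod_univ_eq_prod_range]
    exact prod_congr rfl fun t _ => by rw [hx]
  have hprod2 : (∏ t : Fin n, w (traj δ s0 X t) (x t)) =
      ∏ t ∈ range n, w (traj δ s0 X t) (X t) := by
    rw [← Fin.prod_univ_eq_prod_range]
    exact prod_congr rfl fun t _ => by rw [hx]
  have hiff : (∀ t : Fin n, ψ (↑t + 1) (x t) = 1) ↔ (∀ t < n, ψ (t + 1) (X t) = 1) := by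
    constructor
    · intro h t ht
      have h1 := h ⟨t, ht⟩
      rwa [← hx ⟨t, ht⟩] at h1
    · intro h t
      rw [← hx t]
      exact h ↑t t.isLt
  rw [hprod1, hprod2, if_congr hiff rfl rfl]
  exact main
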